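/- arXiv:2410.23052 — 8 statements merged into one kernel-verified Lean document; each statement's English description precedes it below -/
import Mathlib

section
/- Let R be a commutative ring with an action of a finite group G by ring homomorphisms. If 𝔭 and 𝔮 are G-prime ideals of R such that 𝔭 ∩ R^G = 𝔮 ∩ R^G (equal sets of G-fixed elements), then 𝔭 = 𝔮. -/
/-- A `G`-prime ideal: a proper, `G`-invariant ideal `p` such that whenever all
products `x * (g • y)` lie in `p`, either `x ∈ p` or `y ∈ p`. -/
def IsGPrime (G : Type*) {R : Type*} [Group G] [CommRing R] [MulSemiringAction G R]
    (p : Ideal R) : Prop :=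
  p ≠ ⊤ ∧ (∀ (g : G) (x : R), x ∈ p → g • x ∈ p) ∧
    ∀ x y : R, (∀ g : G, x * (g • y) ∈ p) → x ∈ p ∨ y ∈ p

/-- Every `G`-prime ideal `q` admits a prime ideal `P ⊇ q` such that any element all
of whose `G`-translates lie in `P` already lies in `q`. -/
theorem IsGPrime.exists_prime {G R : Type*} [Group G] [Finite G] [CommRing R]
    [MulSemiringAction G R] (q : Ideal R) (hq : IsGPrime G q) :
    ∃ P : Ideal R, P.IsPrime ∧ q ≤ P ∧ ∀ x : R, (∀ g : G, g • x ∈ P) → x ∈ q := by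
  classical
  have : Fintype G := Fintype.ofFinite G
  set S : Set (Ideal R) := {I | q ≤ I ∧ ∀ x : R, (∀ g : G, g • x ∈ I) → x ∈ q} with hS
  have hqS : q ∈ S := ⟨le_rfl, fun x hx => by simpa using hx 1⟩
  obtain ⟨P, hqP, hPS, hPmax⟩ : ∃ P, q ≤ P ∧ P ∈ S ∧ ∀ I ∈ S, P ≤ I → I ≤ P := by
    have hchainS : ∀ c ⊆ S, IsChain (· ≤ ·) c → ∀ y ∈ c,
        ∃ ub ∈ S, ∀ z ∈ c, z ≤ ub := by
      intro c hcS hchain y hy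
      refine ⟨sSup c, ⟨le_trans (hcS hy).1 (le_sSup hy), ?_⟩, fun z hz => le_sSup hz⟩
      intro x hx
      have hcne : c.Nonempty := ⟨y, hy⟩
      have hdir : DirectedOn (· ≤ ·) c := hchain.directedOn
      have : Nonempty c := ⟨⟨y, hy⟩⟩
      have hx' : ∀ g : G, ∃ I : c, g • x ∈ (I : Ideal R) := by
        intro g
        obtain ⟨I, hIc, hgI⟩ := (Submodule.mem_sSup_of_directed hcne hdir).mp (hx g)
        exact ⟨⟨I, hIc⟩, hgI⟩
      choose f hf using hx'
      obtain ⟨z, hz⟩ := (directedOn_iff_directed.mp hdir).finset_le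
        (Finset.univ.image f)
      have hxz : ∀ g : G, g • x ∈ (z : Ideal R) := fun g =>
        hz (f g) (Finset.mem_image_of_mem f (Finset.mem_univ g)) (hf g)
      exact (hcS z.2).2 x hxz
    obtain ⟨P, hqP, hP⟩ := zorn_le_nonempty₀ S hchainS q hqS
    exact ⟨P, hqP, hP.1, fun I hI hPI => hP.2 hI hPI⟩
  refine ⟨P, ⟨?_, ?_⟩, hqP, hPS.2⟩
  · -- P ≠ ⊤
    intro htop
    refine hq.1 (Ideal.eq_top_iff_one q |>.mpr ?_)
    exact hPS.2 1 (fun g => by simp [htop])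
  · -- primality
    intro a b hab
    by_contra hcon
    push_neg at hcon
    obtain ⟨ha, hb⟩ := hcon
    -- P ⊔ span{a} is strictly bigger, so it fails the condition in S
    have key : ∀ t : R, t ∉ P →
        ∃ u : R, u ∉ q ∧ ∀ g : G, g • u ∈ P ⊔ Ideal.span {t} := by
      intro t ht
      by_contra hK
      push_neg at hK
      have hmem : P ⊔ Ideal.span {t} ∈ S := by
        refine ⟨le_trans hqP le_sup_left, fun x hx => ?_⟩
        by_contra hxq
        obtain ⟨g, hg⟩ := hK x hxq
        exact hg (hx g)
      exact ht (hPmax _ hmem le_sup_left (Ideal.mem_sup_right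
        (Ideal.mem_span_singleton_self t)))
    obtain ⟨u, huq, hu⟩ := key a ha
    obtain ⟨v, hvq, hv⟩ := key b hb
    -- by G-primeness, some u * (g • v) ∉ q
    have : ¬ ∀ g : G, u * (g • v) ∈ q := by
      intro hall
      rcases hq.2.2 u v hall with h | h
      · exact huq h
      · exact hvq h
    push_neg at this
    obtain ⟨g₀, hg₀⟩ := this
    apply hg₀
    apply hPS.2
    intro g
    have h1 : g • u ∈ P ⊔ Ideal.span {a} := hu g
    have h2 : (g * g₀) • v ∈ P ⊔ Ideal.span {b} := hv (g * g₀)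
    rw [Submodule.mem_sup] at h1 h2
    obtain ⟨p₁, hp₁, ra, hra, h1⟩ := h1
    obtain ⟨p₂, hp₂, sb, hsb, h2⟩ := h2
    rw [Ideal.mem_span_singleton'] at hra hsb
    obtain ⟨r, rfl⟩ := hra
    obtain ⟨s, rfl⟩ := hsb
    have : g • (u * g₀ • v) = (p₁ + r * a) * (p₂ + s * b) := by
      rw [smul_mul', smul_smul, h1, h2]
    rw [this]
    have hexp : (p₁ + r * a) * (p₂ + s * b)
        = p₁ * (p₂ + s * b) + (r * a) * p₂ + (r * s) * (a * b) := by ring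
    rw [hexp]
    exact P.add_mem (P.add_mem (P.mul_mem_right _ hp₁) (P.mul_mem_left _ hp₂))
      (P.mul_mem_left _ hab)

/-- One inclusion. -/
theorem IsGPrime.le_of_fixed_le {G R : Type*} [Group G] [Finite G] [CommRing R]
    [MulSemiringAction G R] (p q : Ideal R) (hp : IsGPrime G p) (hq : IsGPrime G q)
    (h : ∀ x : R, (∀ g : G, g • x = x) → x ∈ p → x ∈ q) : p ≤ q := by
  classical
  have : Fintype G := Fintype.ofFinite G
  obtain ⟨P, hPprime, hqP, hPcond⟩ := hq.exists_prime
  by_contra hpq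
  -- p is not contained in any translate of P
  have hnot : ∀ g : G, ¬ p ≤ P.comap (MulSemiringAction.toRingHom G R g) := by
    intro g hg
    apply hpq
    intro x hx
    apply hPcond
    intro g'
    have : (g⁻¹ * g') • x ∈ p := hp.2.1 _ _ hx
    have := hg this
    simpa [smul_smul, mul_assoc] using this
  -- prime avoidance
  have hprime : ∀ g : G, (P.comap (MulSemiringAction.toRingHom G R g)).IsPrime :=
    fun g => hPprime.comap _
  have hsub : ¬ ((p : Set R) ⊆ ⋃ g ∈ ((Finset.univ : Finset G) : Set G),
      (P.comap (MulSemiringAction.toRingHom G R g) : Set R)) := by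
    rw [Ideal.subset_union_prime (1 : G) 1 (fun i _ _ _ => hprime i)]
    push_neg
    intro g _
    exact hnot g
  rw [Set.not_subset] at hsub
  obtain ⟨x, hxp, hxn⟩ := hsub
  have hxn' : ∀ g : G, g • x ∉ P := by
    intro g hgP
    exact hxn (Set.mem_biUnion (Finset.mem_univ g) (by
      show x ∈ P.comap (MulSemiringAction.toRingHom G R g)
      simpa [Ideal.mem_comap] using hgP))
  -- the norm of x
  set N : R := ∏ g : G, g • x with hN
  have hNfix : ∀ g : G, g • N = N := by
    intro g
    rw [hN]
    rw [show g • (∏ g' : G, g' • x) = ∏ g' : G, g • g' • x from map_prod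
      (MulSemiringAction.toRingHom G R g) _ _]
    simp_rw [smul_smul]
    exact Fintype.prod_equiv (Equiv.mulLeft g) _ _ (fun g' => rfl)
  have hNp : N ∈ p := by
    rw [hN, ← Finset.prod_erase_mul Finset.univ _ (Finset.mem_univ (1 : G))]
    exact p.mul_mem_left _ (by simpa using hxp)
  have hNq : N ∈ q := h N hNfix hNp
  have hNP : N ∈ P := hqP hNq
  rw [hN, Ideal.IsPrime.prod_mem_iff] at hNP
  obtain ⟨g, _, hg⟩ := hNP
  exact hxn' g hg

/-- Two `G`-prime ideals with the same `G`-fixed elements are equal. -/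
theorem gPrime_eq_of_fixed_eq {G R : Type*} [Group G] [Finite G] [CommRing R]
    [MulSemiringAction G R] (p q : Ideal R) (hp : IsGPrime G p) (hq : IsGPrime G q)
    (h : ∀ x : R, (∀ g : G, g • x = x) → (x ∈ p ↔ x ∈ q)) : p = q := by
  exact le_antisymm
    (IsGPrime.le_of_fixed_le p q hp hq (fun x hx => (h x hx).mp))
    (IsGPrime.le_of_fixed_le q p hq hp (fun x hx => (h x hx).mpr))
end

section
/- Let R be a commutative ring with an action of a finite group G by ring homomorphisms, and let 𝔭, 𝔮 be prime ideals of R. If ⋂_{g ∈ G} g•𝔭 = ⋂_{g ∈ G} g•𝔮, then there exists g ∈ G with 𝔮 = g•𝔭. -/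
open Pointwise

private lemma smul_le_self_aux {G R : Type*} [Group G] [Finite G] [CommRing R]
    [MulSemiringAction G R] (k : G) (q : Ideal R) (h : k • q ≤ q) : k • q = q := by
  refine le_antisymm h ?_
  have key : ∀ i : ℕ, (k ^ i) • q ≤ q := by
    intro i
    induction i with
    | zero => simp
    | succ n ih =>
      calc (k ^ (n + 1)) • q = (k ^ n) • k • q := by rw [pow_succ, mul_smul]
        _ ≤ (k ^ n) • q := smul_mono_right _ h
        _ ≤ q := ih
  have hn : orderOf k ≠ 0 := (orderOf_pos k).ne'
  obtain ⟨m, hm⟩ : ∃ m, orderOf k = m + 1 := ⟨orderOf k - 1, (Nat.succ_pred_eq_of_pos (orderOf_pos k)).symm⟩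
  calc q = (k ^ (orderOf k)) • q := by rw [pow_orderOf_eq_one, one_smul]
    _ = k • (k ^ m) • q := by rw [hm, pow_succ', mul_smul]
    _ ≤ k • q := smul_mono_right _ (key m)

private lemma exists_smul_le_aux {G R : Type*} [Group G] [Finite G] [CommRing R]
    [MulSemiringAction G R] (p q : Ideal R) (hq : q.IsPrime)
    (h : (⨅ g : G, g • p) ≤ q) : ∃ g : G, g • p ≤ q := by
  cases nonempty_fintype G
  rw [← Finset.inf_univ_eq_iInf] at h
  obtain ⟨g, -, hg⟩ := hq.inf_le'.mp h
  exact ⟨g, hg⟩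

/-- If the orbit-intersections of two prime ideals agree, the primes are in the
same `G`-orbit. -/
theorem orbit_eq_of_iInf_smul_eq {G R : Type*} [Group G] [Finite G] [CommRing R]
    [MulSemiringAction G R] (p q : Ideal R) (hp : p.IsPrime) (hq : q.IsPrime)
    (h : (⨅ g : G, g • p) = ⨅ g : G, g • q) : ∃ g : G, q = g • p := by
  have h1 : (⨅ g : G, g • p) ≤ q := by
    rw [h]; simpa using iInf_le (fun g : G => g • q) 1
  have h2 : (⨅ g : G, g • q) ≤ p := by
    rw [← h]; simpa using iInf_le (fun g : G => g • p) 1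
  obtain ⟨g, hg⟩ := exists_smul_le_aux p q hq h1
  obtain ⟨g', hg'⟩ := exists_smul_le_aux q p hp h2
  -- g • p ≤ q, g' • q ≤ p
  have hk : (g * g') • q ≤ q := by
    rw [mul_smul]
    exact (smul_mono_right g hg').trans hg
  have hfix := smul_le_self_aux (g * g') q hk
  refine ⟨g, le_antisymm ?_ hg⟩
  have : (g * g') • q ≤ g • p := by
    rw [mul_smul]; exact smul_mono_right g hg'
  rwa [hfix] at this
end

section
/- Let R be a commutative ring with an action of a finite group G by ring homomorphisms, and let i : R^G → R be the inclusion of the fixed subring. Then the induced map Spec(R) → Spec(R^G), 𝔭 ↦ 𝔭 ∩ R^G, descends to a bijection from the set of G-orbits of Spec(R) onto Spec(R^G). -/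
open Pointwise

/-- The subring of `G`-fixed elements of `R`. -/
def fixedSubring (G R : Type*) [Group G] [CommRing R] [MulSemiringAction G R] :
    Subring R where
  carrier := {x | ∀ g : G, g • x = x}
  mul_mem' := fun ha hb g => by rw [smul_mul', ha g, hb g]
  add_mem' := fun ha hb g => by rw [smul_add, ha g, hb g]
  one_mem' := fun g => smul_one g
  zero_mem' := fun g => smul_zero g
  neg_mem' := fun ha g => by rw [smul_neg, ha g]

section Aux
variable {G R : Type*} [Group G] [Finite G] [CommRing R] [MulSemiringAction G R]

lemma fixedSubring_isIntegral : Algebra.IsIntegral (fixedSubring G R) R := by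
  have := Fintype.ofFinite G
  constructor
  intro x
  refine ⟨(prodXSubSMul G R x).toSubring (fixedSubring G R) ?_, ?_, ?_⟩
  · intro c hc g
    obtain ⟨n, _, hn⟩ := Polynomial.mem_coeffs_iff.1 hc
    exact hn.symm ▸ prodXSubSMul.coeff G R x g n
  · erw [Polynomial.monic_toSubring]; exact prodXSubSMul.monic G R x
  · show Polynomial.eval₂ ((fixedSubring G R).subtype) x _ = 0
    rw [Polynomial.eval₂_eq_eval_map]; erw [Polynomial.map_toSubring]
    exact prodXSubSMul.eval G R x

omit [Finite G] in
lemma comap_smul_eq (g : G) (p : Ideal R) :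
    Ideal.comap (fixedSubring G R).subtype (g • p) = Ideal.comap (fixedSubring G R).subtype p := by
  ext a
  simp only [Ideal.mem_comap]
  show (a : R) ∈ g • p ↔ (a : R) ∈ p
  rw [Ideal.mem_pointwise_smul_iff_inv_smul_mem, a.2 g⁻¹]

end Aux

/-- The map `Spec R → Spec Rᴳ`, `𝔭 ↦ 𝔭 ∩ Rᴳ`, is surjective, and two primes of `R`
have the same image if and only if they lie in the same `G`-orbit; hence it descends
to a bijection from the `G`-orbits of `Spec R` onto `Spec Rᴳ`. -/
theorem spec_quotient_bijection {G R : Type*} [Group G] [Finite G] [CommRing R]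
    [MulSemiringAction G R] :
    (∀ P : Ideal (fixedSubring G R), P.IsPrime →
      ∃ p : Ideal R, p.IsPrime ∧ Ideal.comap (fixedSubring G R).subtype p = P) ∧
    (∀ p q : Ideal R, p.IsPrime → q.IsPrime →
      (Ideal.comap (fixedSubring G R).subtype p = Ideal.comap (fixedSubring G R).subtype q ↔
        ∃ g : G, q = g • p)) := by
  haveI hInt : Algebra.IsIntegral (fixedSubring G R) R := fixedSubring_isIntegral
  constructor
  · intro P hP
    haveI := hP
    obtain ⟨Q, -, hQ, hQ'⟩ := Ideal.exists_ideal_over_prime_of_isIntegral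
      (R := fixedSubring G R) (S := R) P ⊥
      (le_trans (le_of_eq (by
        rw [← RingHom.ker_eq_comap_bot]
        exact (RingHom.injective_iff_ker_eq_bot _).mp Subtype.val_injective)) bot_le)
    exact ⟨Q, hQ, hQ'⟩
  · intro p q hp hq
    haveI := hp; haveI := hq
    have := Fintype.ofFinite G
    classical
    constructor
    · intro h
      have hsub : (q : Set R) ⊆
          ⋃ g ∈ ((Finset.univ : Finset G) : Set G), ((g • p : Ideal R) : Set R) := by
        intro x hx
        set N := ∏ g : G, g • x with hN
        have hNfix : ∀ h : G, h • N = N := by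
          intro h
          rw [hN, Finset.smul_prod']
          exact Fintype.prod_bijective (fun g' => h * g') (Group.mulLeft_bijective h) _ _
            (fun g' => smul_smul h g' x)
        have hNq : N ∈ q := by
          rw [hN, ← Finset.mul_prod_erase Finset.univ _ (Finset.mem_univ (1 : G))]
          exact q.mul_mem_right _ (by simpa using hx)
        have hNp : N ∈ p := by
          have h1 : (⟨N, hNfix⟩ : fixedSubring G R) ∈
              Ideal.comap (fixedSubring G R).subtype q := Ideal.mem_comap.mpr hNq
          rw [← h] at h1
          exact h1
        obtain ⟨g, -, hg⟩ := Ideal.IsPrime.prod_mem_iff.mp hNp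
        have : x ∈ g⁻¹ • p := Ideal.mem_inv_pointwise_smul_iff.mpr hg
        exact Set.mem_biUnion (by simp) this
      obtain ⟨g, -, hle⟩ := (Ideal.subset_union_prime (f := fun g : G => g • p) 1 1
        (fun i _ _ _ => inferInstance)).mp hsub
      rcases eq_or_lt_of_le hle with heq | hlt
      · exact ⟨g, heq⟩
      · exfalso
        obtain ⟨x, hxJ, hxI⟩ := SetLike.exists_of_lt hlt
        have hlt' := Ideal.comap_lt_comap_of_integral_mem_sdiff (I := q) (J := g • p) hle
          ⟨hxJ, hxI⟩ (hInt.isIntegral x)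
        have heq' : Ideal.comap (fixedSubring G R).subtype (g • p) =
            Ideal.comap (fixedSubring G R).subtype q := (comap_smul_eq g p).trans h
        exact absurd heq'.symm (ne_of_lt hlt')
    · rintro ⟨g, rfl⟩
      exact (comap_smul_eq g p).symm
end

section
/- Let R be a commutative ring with an action of a finite group G by ring homomorphisms, let 𝔭 be a prime ideal of R^G, and let 𝔭̄ be the unique G-prime ideal of R with 𝔭̄ ∩ R^G = 𝔭. Then for any G-invariant ideal I of R, I ∩ R^G ⊆ 𝔭 if and only if I ⊆ 𝔭̄. -/
open Pointwise

/-- A `G`-prime ideal is closed under radicals. -/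
lemma gprime_pow_mem {G R : Type*} [Group G] [Finite G] [CommRing R]
    [MulSemiringAction G R] {pbar : Ideal R} (h : IsGPrime G pbar)
    {x : R} {n : ℕ} (hx : x ^ n ∈ pbar) : x ∈ pbar := by
  by_contra hxp
  have : Fintype G := Fintype.ofFinite G
  classical
  have claim : ∀ m : ℕ, ∃ l : List G, l.length = m ∧
      x * (l.map (fun g => g • x)).prod ∉ pbar := by
    intro m
    induction m with
    | zero => exact ⟨[], rfl, by simpa using hxp⟩
    | succ m ih =>
      obtain ⟨l, hl, hb⟩ := ih
      have hex : ¬ ∀ g : G, (x * (l.map (fun g => g • x)).prod) * (g • x) ∈ pbar :=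
        fun hall => ((h.2.2 _ x hall).elim hb hxp)
      push_neg at hex
      obtain ⟨g, hg⟩ := hex
      refine ⟨g :: l, by simp [hl], ?_⟩
      intro hmem
      apply hg
      have heq : x * ((g :: l).map (fun g => g • x)).prod
          = x * (l.map (fun g => g • x)).prod * (g • x) := by
        simp only [List.map_cons, List.prod_cons]; ring
      rwa [heq] at hmem
  obtain ⟨l, hl, hb⟩ := claim (n * Fintype.card G + 1)
  have hcount : ∃ g : G, n ≤ (l : Multiset G).count g := by
    by_contra hno
    push_neg at hno
    have hcard : (l : Multiset G).card = n * Fintype.card G + 1 := by simpa using hl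
    have hsum : ∑ g : G, (l : Multiset G).count g = (l : Multiset G).card := by
      rw [← Multiset.toFinset_sum_count_eq (l : Multiset G)]
      exact (Finset.sum_subset (Finset.subset_univ _)
        (fun a _ ha => Multiset.count_eq_zero_of_notMem
          (by simpa using ha))).symm
    have hle : ∑ g : G, (l : Multiset G).count g ≤ ∑ _g : G, (n - 1) :=
      Finset.sum_le_sum (fun g _ => Nat.le_sub_one_of_lt (hno g))
    rw [hsum, hcard, Finset.sum_const, Finset.card_univ, smul_eq_mul] at hle
    have h2 : Fintype.card G * (n - 1) ≤ Fintype.card G * n :=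
      Nat.mul_le_mul_left _ (Nat.sub_le n 1)
    have h3 : Fintype.card G * n = n * Fintype.card G := Nat.mul_comm _ _
    omega
  obtain ⟨g, hg⟩ := hcount
  apply hb
  have hrep : Multiset.replicate n g ≤ (l : Multiset G) :=
    Multiset.le_count_iff_replicate_le.mp hg
  have hrep2 : Multiset.replicate n (g • x) ≤ ((l : Multiset G).map (fun g => g • x)) := by
    have := Multiset.map_le_map (f := fun g : G => g • x) hrep
    rwa [Multiset.map_replicate] at this
  obtain ⟨t, ht⟩ := Multiset.le_iff_exists_add.mp hrep2
  have hprod : ((l.map (fun g => g • x)) : List R).prod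
      = (g • x) ^ n * t.prod := by
    have : ((l.map (fun g => g • x) : List R) : Multiset R).prod
        = (Multiset.replicate n (g • x) + t).prod := by
      rw [← ht]; simp
    simpa [Multiset.prod_replicate] using this
  rw [hprod]
  have hgx : (g • x) ^ n ∈ pbar := by
    rw [← smul_pow']
    exact h.2.1 g _ hx
  exact Ideal.mul_mem_left _ _ (Ideal.mul_mem_right _ _ hgx)

/-- For a prime `𝔭` of `Rᴳ` with unique `G`-prime lift `𝔭̄`, a `G`-invariant ideal `I`
satisfies `I ∩ Rᴳ ⊆ 𝔭` iff `I ⊆ 𝔭̄`. -/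
theorem invariant_ideal_le_iff {G R : Type*} [Group G] [Finite G] [CommRing R]
    [MulSemiringAction G R] (p : Ideal (fixedSubring G R)) (hp : p.IsPrime)
    (pbar : Ideal R) (hpbar : IsGPrime G pbar)
    (hlift : Ideal.comap (fixedSubring G R).subtype pbar = p)
    (I : Ideal R) (hI : ∀ (g : G) (x : R), x ∈ I → g • x ∈ I) :
    Ideal.comap (fixedSubring G R).subtype I ≤ p ↔ I ≤ pbar := by
  have : Fintype G := Fintype.ofFinite G
  classical
  constructor
  · intro hle x hx
    set n := Fintype.card G with hn
    set P : Finset G → R := fun t => ∏ g ∈ t, g • x with hP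
    set e : ℕ → R := fun k => ∑ t ∈ Finset.univ.powersetCard k, P t with he
    -- invariance of e k
    have he_inv : ∀ (k : ℕ) (h : G), h • e k = e k := by
      intro k h
      rw [he]
      simp only
      rw [Finset.smul_sum]
      have h1 : ∀ t : Finset G, h • P t = ∏ g ∈ t, (h * g) • x := by
        intro t
        rw [hP]
        simp only
        rw [Finset.smul_prod']
        exact Finset.prod_congr rfl (fun g _ => by rw [smul_smul])
      calc ∑ t ∈ Finset.univ.powersetCard k, h • P t
          = ∑ t ∈ Finset.univ.powersetCard k, ∏ g ∈ t, (h * g) • x :=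
            Finset.sum_congr rfl (fun t _ => h1 t)
        _ = ∑ t ∈ Finset.univ.powersetCard k, P t := by
            refine Finset.sum_equiv ((Equiv.mulLeft h).finsetCongr) ?_ ?_
            · intro t
              simp [Finset.mem_powersetCard_univ]
            · intro t _
              rw [hP]
              simp only [Equiv.finsetCongr_apply]
              rw [Finset.prod_map]
              exact Finset.prod_congr rfl (fun g _ => by simp)
    -- e (k+1) ∈ I
    have heI : ∀ k : ℕ, e (k + 1) ∈ I := by
      intro k
      rw [he]
      refine Ideal.sum_mem _ (fun t htmem => ?_)
      have hc : t.card = k + 1 := (Finset.mem_powersetCard_univ).mp htmem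
      have hne : t.Nonempty := Finset.card_pos.mp (by omega)
      obtain ⟨g, hgt⟩ := hne
      rw [hP]
      simp only
      rw [← Finset.mul_prod_erase t _ hgt]
      exact Ideal.mul_mem_right _ _ (hI g x hx)
    -- e (k+1) ∈ pbar
    have hepbar : ∀ k : ℕ, e (k + 1) ∈ pbar := by
      intro k
      have hz : (⟨e (k + 1), he_inv (k + 1)⟩ : fixedSubring G R)
          ∈ Ideal.comap (fixedSubring G R).subtype I := heI k
      have := hle hz
      rw [← hlift] at this
      exact this
    -- the key identity
    have hzero : ∑ t ∈ (Finset.univ : Finset G).powerset,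
        (-1 : R) ^ t.card * P t * x ^ (n - t.card) = 0 := by
      have h0 : ∏ g : G, (x - g • x) = 0 :=
        Finset.prod_eq_zero (Finset.mem_univ (1 : G)) (by simp)
      have hexp : ∏ g : G, (x - g • x)
          = ∑ t ∈ (Finset.univ : Finset G).powerset,
              (-1 : R) ^ t.card * P t * x ^ (n - t.card) := by
        have := Finset.prod_add (fun g : G => -(g • x)) (fun _ : G => x) Finset.univ
        calc ∏ g : G, (x - g • x) = ∏ g : G, (-(g • x) + x) := by
              exact Finset.prod_congr rfl (fun g _ => by ring)
          _ = ∑ t ∈ (Finset.univ : Finset G).powerset,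
                (∏ g ∈ t, -(g • x)) * ∏ _g ∈ Finset.univ \ t, x := this
          _ = ∑ t ∈ (Finset.univ : Finset G).powerset,
                (-1 : R) ^ t.card * P t * x ^ (n - t.card) := by
              refine Finset.sum_congr rfl (fun t htm => ?_)
              rw [Finset.prod_const, Finset.card_sdiff_of_subset (Finset.mem_powerset.mp htm),
                Finset.card_univ, ← hn]
              congr 1
              rw [hP]
              simp only
              calc ∏ g ∈ t, -(g • x) = ∏ g ∈ t, (-1 : R) * (g • x) :=
                    Finset.prod_congr rfl (fun g _ => by ring)
                _ = (-1 : R) ^ t.card * ∏ g ∈ t, g • x := by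
                    rw [Finset.prod_mul_distrib, Finset.prod_const]
      rw [← hexp, h0]
    have hdecomp : ∑ t ∈ (Finset.univ : Finset G).powerset,
        (-1 : R) ^ t.card * P t * x ^ (n - t.card)
        = ∑ j ∈ Finset.range (n + 1), ∑ t ∈ Finset.univ.powersetCard j,
            (-1 : R) ^ t.card * P t * x ^ (n - t.card) := by
      have hmaps : ∀ t ∈ (Finset.univ : Finset G).powerset,
          t.card ∈ Finset.range (n + 1) := by
        intro t ht
        rw [Finset.mem_range, Nat.lt_succ_iff, hn, ← Finset.card_univ]
        exact Finset.card_le_card (Finset.mem_powerset.mp ht)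
      rw [← Finset.sum_fiberwise_of_maps_to hmaps
        (fun t => (-1 : R) ^ t.card * P t * x ^ (n - t.card))]
      exact Finset.sum_congr rfl (fun j _ => by rw [Finset.powersetCard_eq_filter])
    have hinner : ∀ j : ℕ, ∑ t ∈ Finset.univ.powersetCard j,
        (-1 : R) ^ t.card * P t * x ^ (n - t.card)
        = (-1 : R) ^ j * (e j * x ^ (n - j)) := by
      intro j
      rw [he]
      simp only
      rw [Finset.sum_mul, Finset.mul_sum]
      refine Finset.sum_congr rfl (fun t ht => ?_)
      rw [Finset.mem_powersetCard_univ.mp ht]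
      ring
    have he0 : e 0 = 1 := by
      rw [he]
      simp only
      rw [Finset.powersetCard_zero, Finset.sum_singleton, hP]
      simp
    have hsum0 : ∑ j ∈ Finset.range (n + 1), (-1 : R) ^ j * (e j * x ^ (n - j)) = 0 := by
      rw [← hzero, hdecomp]
      exact Finset.sum_congr rfl (fun j _ => (hinner j).symm)
    have hxn : x ^ n
        = -∑ i ∈ Finset.range n, (-1 : R) ^ (i + 1) * (e (i + 1) * x ^ (n - (i + 1))) := by
      rw [Finset.sum_range_succ'] at hsum0
      simp only [pow_zero, one_mul, he0, Nat.sub_zero] at hsum0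
      linear_combination hsum0
    have hxnmem : x ^ n ∈ pbar := by
      rw [hxn]
      exact neg_mem (Ideal.sum_mem _ (fun i _ =>
        Ideal.mul_mem_left _ _ (Ideal.mul_mem_right _ _ (hepbar i))))
    exact gprime_pow_mem hpbar hxnmem
  · intro hle
    rw [← hlift]
    exact Ideal.comap_mono hle
end

section
/- Let f : R → S be an integral ring homomorphism of commutative rings and let 𝔭 be a prime ideal of S. Then the Krull dimension of S/𝔭 equals the Krull dimension of R/f⁻¹(𝔭); equivalently, the coheight of 𝔭 in S equals the coheight of f⁻¹(𝔭) in R. -/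
section Aux

variable {A B : Type*} [CommRing A] [CommRing B] [Algebra A B] [Algebra.IsIntegral A B]

lemma krullDim_le_of_isIntegral_aux :
    ringKrullDim B ≤ ringKrullDim A := by
  apply Order.krullDim_le_of_strictMono (PrimeSpectrum.comap (algebraMap A B))
  intro P Q hPQ
  have hlt : P.asIdeal < Q.asIdeal := hPQ
  obtain ⟨x, hxQ, hxP⟩ := SetLike.exists_of_lt hlt
  exact Ideal.comap_lt_comap_of_integral_mem_sdiff (I := P.asIdeal) (J := Q.asIdeal)
    hlt.le ⟨hxQ, hxP⟩ (Algebra.IsIntegral.isIntegral x)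

lemma lift_chain_of_isIntegral_aux (hinj : Function.Injective (algebraMap A B))
    (n : ℕ) :
    ∀ c : LTSeries (PrimeSpectrum A), c.length = n →
    ∃ d : LTSeries (PrimeSpectrum B), d.length = c.length ∧
      (PrimeSpectrum.comap (algebraMap A B)) d.last = c.last := by
  induction n with
  | zero =>
    intro c hc
    obtain ⟨Q, _, hQprime, hQ⟩ := Ideal.exists_ideal_over_prime_of_isIntegral
      c.last.asIdeal ⊥ (by
        rw [← RingHom.ker_eq_comap_bot (algebraMap A B), (RingHom.injective_iff_ker_eq_bot _).1 hinj]
        exact bot_le)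
    exact ⟨RelSeries.singleton _ ⟨Q, hQprime⟩, by rw [hc]; rfl, PrimeSpectrum.ext hQ⟩
  | succ n ih =>
    intro c hc
    have hc0 : c.length ≠ 0 := by omega
    have helen : c.eraseLast.length = n := by
      simp [RelSeries.eraseLast]; omega
    obtain ⟨d, hlen, hlast⟩ := ih c.eraseLast helen
    have hx : c.eraseLast.last < c.last := c.eraseLast_last_rel_last hc0
    have hasid : (PrimeSpectrum.comap (algebraMap A B) d.last).asIdeal
        = c.eraseLast.last.asIdeal := congrArg PrimeSpectrum.asIdeal hlast
    have hle : (d.last).asIdeal.comap (algebraMap A B) ≤ c.last.asIdeal := by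
      rw [show (d.last).asIdeal.comap (algebraMap A B) = c.eraseLast.last.asIdeal from hasid]
      exact le_of_lt hx
    haveI := d.last.isPrime
    obtain ⟨Q, hQge, hQprime, hQ⟩ := Ideal.exists_ideal_over_prime_of_isIntegral
      c.last.asIdeal d.last.asIdeal hle
    have hne : d.last ≠ (⟨Q, hQprime⟩ : PrimeSpectrum B) := by
      intro h
      apply hx.ne
      apply PrimeSpectrum.ext
      rw [← hasid, h]
      exact hQ
    have hQge' : d.last < (⟨Q, hQprime⟩ : PrimeSpectrum B) :=
      lt_of_le_of_ne (by exact hQge) hne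
    refine ⟨d.snoc ⟨Q, hQprime⟩ hQge', ?_, ?_⟩
    · simp only [RelSeries.snoc, RelSeries.append_length, RelSeries.singleton_length]
      change d.length + 0 + 1 = c.length
      omega
    rw [RelSeries.last_snoc]
    exact PrimeSpectrum.ext hQ

lemma krullDim_ge_of_isIntegral_aux (hinj : Function.Injective (algebraMap A B)) :
    ringKrullDim A ≤ ringKrullDim B := by
  rw [ringKrullDim, ringKrullDim, Order.krullDim]
  apply iSup_le
  intro c
  obtain ⟨d, hlen, -⟩ := lift_chain_of_isIntegral_aux hinj c.length c rfl
  rw [← hlen]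
  exact Order.LTSeries.length_le_krullDim d

lemma krullDim_eq_of_isIntegral_aux' {A B : Type*} [CommRing A] [CommRing B] (g : A →+* B)
    (hg : g.IsIntegral) (hinj : Function.Injective g) :
    ringKrullDim B = ringKrullDim A := by
  letI := g.toAlgebra
  haveI : Algebra.IsIntegral A B := ⟨hg⟩
  exact le_antisymm krullDim_le_of_isIntegral_aux (krullDim_ge_of_isIntegral_aux hinj)

end Aux

/-- For an integral ring map `f : R → S` and prime `𝔭` of `S`, the coheight of `𝔭`
equals the coheight of `f⁻¹(𝔭)`, i.e. `dim S/𝔭 = dim R/f⁻¹(𝔭)`. -/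
theorem coheight_eq_of_isIntegral {R S : Type*} [CommRing R] [CommRing S]
    (f : R →+* S) (hf : f.IsIntegral) (p : Ideal S) (hp : p.IsPrime) :
    ringKrullDim (S ⧸ p) = ringKrullDim (R ⧸ Ideal.comap f p) := by
  exact krullDim_eq_of_isIntegral_aux' (Ideal.quotientMap p f le_rfl)
    (hf.quotient f) (Ideal.quotientMap_injective)
end

section
/- Let R = ℤ[x,t,n]/⟨t² − pt, tn − t·x^p⟩ for a prime p. Then R has no p-torsion, i.e. for all r ∈ R, p·r = 0 implies r = 0. -/
open MvPolynomial

/-- The ring `ℤ[x,t,n]/⟨t² - p·t, t·n - t·x^p⟩` has no `p`-torsion.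
Here `X 0 = x`, `X 1 = t`, `X 2 = n`. -/
theorem free_fixed_level_no_p_torsion (p : ℕ) (hp : p.Prime)
    (r : MvPolynomial (Fin 3) ℤ ⧸
      Ideal.span ({X 1 ^ 2 - C (p : ℤ) * X 1, X 1 * X 2 - X 1 * X 0 ^ p} :
        Set (MvPolynomial (Fin 3) ℤ)))
    (h : (p : MvPolynomial (Fin 3) ℤ ⧸
      Ideal.span ({X 1 ^ 2 - C (p : ℤ) * X 1, X 1 * X 2 - X 1 * X 0 ^ p} :
        Set (MvPolynomial (Fin 3) ℤ))) * r = 0) : r = 0 := by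
  obtain ⟨f, rfl⟩ := Ideal.Quotient.mk_surjective r
  set I : Ideal (MvPolynomial (Fin 3) ℤ) :=
    Ideal.span ({X 1 ^ 2 - C (p : ℤ) * X 1, X 1 * X 2 - X 1 * X 0 ^ p} :
      Set (MvPolynomial (Fin 3) ℤ)) with hI
  rw [← map_natCast (Ideal.Quotient.mk I) p, ← map_mul,
    Ideal.Quotient.eq_zero_iff_mem] at h
  rw [Ideal.Quotient.eq_zero_iff_mem]
  -- substitution homs
  set φ₁ : MvPolynomial (Fin 3) ℤ →ₐ[ℤ] MvPolynomial (Fin 3) ℤ :=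
    aeval ![X 0, 0, X 2] with hφ₁
  set φ₂ : MvPolynomial (Fin 3) ℤ →ₐ[ℤ] MvPolynomial (Fin 3) ℤ :=
    aeval ![X 0, C (p : ℤ), X 0 ^ p] with hφ₂
  have hpne : ((p : ℕ) : MvPolynomial (Fin 3) ℤ) ≠ 0 := by
    simp [hp.ne_zero]
  -- both substitutions kill I
  have hker : ∀ (φ : MvPolynomial (Fin 3) ℤ →ₐ[ℤ] MvPolynomial (Fin 3) ℤ),
      φ (X 1 ^ 2 - C (p : ℤ) * X 1) = 0 → φ (X 1 * X 2 - X 1 * X 0 ^ p) = 0 →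
      ∀ a ∈ I, φ a = 0 := by
    intro φ h1 h2 a ha
    have hle : I ≤ RingHom.ker φ.toRingHom := by
      rw [hI, Ideal.span_le]
      rintro b hb
      simp only [Set.mem_insert_iff, Set.mem_singleton_iff] at hb
      rcases hb with rfl | rfl
      · simpa [RingHom.mem_ker] using h1
      · simpa [RingHom.mem_ker] using h2
    exact hle ha
  have hφ₁I : ∀ a ∈ I, φ₁ a = 0 := by
    apply hker <;> simp [hφ₁]
  have hφ₂I : ∀ a ∈ I, φ₂ a = 0 := by
    apply hker <;> simp [hφ₂]
    ring_nf
  -- φ₁ f = 0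
  have hφ₁f : φ₁ f = 0 := by
    have h1 : ((p : ℕ) : MvPolynomial (Fin 3) ℤ) * φ₁ f = 0 := by
      simpa using hφ₁I _ h
    rcases mul_eq_zero.mp h1 with h' | h'
    · exact absurd h' hpne
    · exact h'
  -- hence f is a multiple of X 1
  have key1 : (Ideal.Quotient.mk (Ideal.span {(X 1 : MvPolynomial (Fin 3) ℤ)})).comp
      φ₁.toRingHom = Ideal.Quotient.mk _ := by
    apply MvPolynomial.ringHom_ext
    · intro a; simp [hφ₁]
    · intro i
      fin_cases i <;> simp [hφ₁]
  have hf1 : f ∈ Ideal.span {(X 1 : MvPolynomial (Fin 3) ℤ)} := by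
    have hc := RingHom.congr_fun key1 f
    rw [RingHom.comp_apply] at hc
    rw [← Ideal.Quotient.eq_zero_iff_mem, ← hc]
    simp [hφ₁f]
  obtain ⟨g, rfl⟩ := Ideal.mem_span_singleton'.mp hf1
  -- reduce g modulo J = (t - p, n - x^p)
  set J : Ideal (MvPolynomial (Fin 3) ℤ) :=
    Ideal.span {X 1 - C (p : ℤ), X 2 - X 0 ^ p} with hJ
  have key2 : (Ideal.Quotient.mk J).comp φ₂.toRingHom = Ideal.Quotient.mk J := by
    apply MvPolynomial.ringHom_ext
    · intro a; simp [hφ₂]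
    · intro i
      fin_cases i <;> simp [hφ₂]
      · refine (Ideal.Quotient.eq.mpr ?_)
        have hm : (X 1 - C (p : ℤ) : MvPolynomial (Fin 3) ℤ) ∈ J :=
          Ideal.subset_span (Set.mem_insert _ _)
        simpa using neg_mem hm
      · refine (Ideal.Quotient.eq.mpr ?_)
        have hm : (X 2 - X 0 ^ p : MvPolynomial (Fin 3) ℤ) ∈ J :=
          Ideal.subset_span (Set.mem_insert_of_mem _ rfl)
        simpa using neg_mem hm
  have hgJ : g - φ₂ g ∈ J := by
    have hc := RingHom.congr_fun key2 g
    rw [RingHom.comp_apply] at hc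
    have := Ideal.Quotient.eq.mp hc
    simpa using neg_mem this
  -- multiplying J by X 1 lands in I
  have mulmem : ∀ j ∈ J, X 1 * j ∈ I := by
    intro j hj
    refine Submodule.span_induction ?_ ?_ ?_ ?_ hj
    · rintro y (rfl | rfl)
      · have : (X 1 : MvPolynomial (Fin 3) ℤ) * (X 1 - C (p : ℤ))
            = X 1 ^ 2 - C (p : ℤ) * X 1 := by ring
        rw [this, hI]
        exact Ideal.subset_span (Set.mem_insert _ _)
      · have : (X 1 : MvPolynomial (Fin 3) ℤ) * (X 2 - X 0 ^ p)
            = X 1 * X 2 - X 1 * X 0 ^ p := by ring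
        rw [this, hI]
        exact Ideal.subset_span (Set.mem_insert_of_mem _ rfl)
    · simp
    · intro a b _ _ ha hb
      rw [mul_add]; exact add_mem ha hb
    · intro c a _ ha
      rw [smul_eq_mul, show (X 1 : MvPolynomial (Fin 3) ℤ) * (c * a) = c * (X 1 * a) by ring]
      exact Ideal.mul_mem_left _ _ ha
  have hsub : X 1 * g - X 1 * φ₂ g ∈ I := by
    rw [← mul_sub]
    exact mulmem _ hgJ
  -- φ₂ g = 0
  have hg0 : φ₂ g = 0 := by
    have h2 := hφ₂I _ h
    rw [map_mul, map_mul, map_natCast] at h2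
    have hX1 : φ₂ (X 1) = C (p : ℤ) := by simp [hφ₂]
    rw [hX1] at h2
    rcases mul_eq_zero.mp h2 with h' | h'
    · exact absurd h' hpne
    rcases mul_eq_zero.mp h' with h'' | h''
    · exact h''
    · exact absurd h'' (by simp [hp.ne_zero])
  rw [hg0, mul_zero, sub_zero] at hsub
  rw [mul_comm]
  exact hsub
end

section
/- Let R be a commutative ring and 𝔭₀ ⊂ 𝔭₁ ⊂ 𝔭₂ a strictly increasing chain of three prime ideals of the polynomial ring R[x]. Then it is not the case that 𝔭₀ ∩ R = 𝔭₁ ∩ R = 𝔭₂ ∩ R; i.e., at most two of the three primes have the same contraction to R. -/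
open Polynomial

section Aux

variable {D : Type*} [CommRing D] [IsDomain D]

/-- If `K` is the fraction field of a domain `D`, then `K[X]` is the localization of
`D[X]` at the nonzero constants. -/
theorem aux_isLocalization :
    letI : Algebra D[X] (FractionRing D)[X] :=
      (mapRingHom (algebraMap D (FractionRing D))).toAlgebra
    IsLocalization ((nonZeroDivisors D).map (C : D →+* D[X])) (FractionRing D)[X] := by
  letI : Algebra D[X] (FractionRing D)[X] :=
    (mapRingHom (algebraMap D (FractionRing D))).toAlgebra
  have halg : (algebraMap D[X] (FractionRing D)[X]) =
      mapRingHom (algebraMap D (FractionRing D)) := rfl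
  refine ⟨⟨?_, ?_, ?_⟩⟩
  · rintro ⟨p, q, hq, rfl⟩
    rw [halg]
    simp only [coe_mapRingHom, map_C]
    exact IsUnit.map C (IsLocalization.map_units (FractionRing D) ⟨q, hq⟩)
  · intro p
    simp only [halg, coe_mapRingHom, Prod.exists, Subtype.exists, Submonoid.mem_map,
      exists_prop, exists_exists_and_eq_and]
    refine Polynomial.induction_on' p ?_ ?_
    · intro p p' ⟨x, m, hm, hxm⟩ ⟨x', m', hm', hxm'⟩
      refine ⟨x * C m' + x' * C m, m * m', Submonoid.mul_mem _ hm hm', ?_⟩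
      simp only [map_C] at hxm hxm'
      simp only [Polynomial.map_mul, Polynomial.map_add, map_C, map_mul, C_mul]
      rw [← hxm, ← hxm']
      ring
    · intro u s
      obtain ⟨⟨r, m⟩, hr⟩ := IsLocalization.surj (nonZeroDivisors D) s
      refine ⟨monomial u r, m, m.property, ?_⟩
      simp only [map_monomial, map_C]
      rw [mul_comm, C_mul_monomial, mul_comm, hr]
  · intro p q h
    simp_rw [halg, coe_mapRingHom, Polynomial.ext_iff, coeff_map] at h
    choose c hc using fun m ↦ IsLocalization.exists_of_eq (M := nonZeroDivisors D) (h m)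
    simp only [Subtype.exists, Submonoid.mem_map, exists_prop, exists_exists_and_eq_and]
    classical
    refine ⟨Finset.prod (p.support ∪ q.support) fun m ↦ c m, ?_, ?_⟩
    · exact (nonZeroDivisors D).prod_mem fun m _ ↦ (c m).property
    · ext m
      simp only [coeff_C_mul]
      by_cases h : m ∈ p.support ∪ q.support
      · exact Finset.prod_mul_eq_prod_mul_of_exists m h (hc m)
      · simp only [Finset.mem_union, mem_support_iff, ne_eq, not_or, Decidable.not_not] at h
        rw [h.left, h.right]

/-- A domain `D` admits no chain of three primes of `D[X]` all contracting to `⊥`. -/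
theorem aux_domain (q₀ q₁ q₂ : Ideal (Polynomial D)) (h₀ : q₀.IsPrime)
    (h₁ : q₁.IsPrime) (h₂ : q₂.IsPrime) (h01 : q₀ < q₁) (h12 : q₁ < q₂)
    (c₁ : Ideal.comap (C : D →+* Polynomial D) q₁ = ⊥)
    (c₂ : Ideal.comap (C : D →+* Polynomial D) q₂ = ⊥) : False := by
  letI : Algebra D[X] (FractionRing D)[X] :=
    (mapRingHom (algebraMap D (FractionRing D))).toAlgebra
  haveI := aux_isLocalization (D := D)
  set M := (nonZeroDivisors D).map (C : D →+* D[X]) with hM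
  set K := FractionRing D
  have hdisj : ∀ q : Ideal D[X], Ideal.comap (C : D →+* Polynomial D) q = ⊥ →
      Disjoint (M : Set D[X]) (q : Set D[X]) := by
    intro q hq
    rw [Set.disjoint_left]
    rintro x ⟨d, hd, rfl⟩ hxq
    have : d ∈ Ideal.comap (C : D →+* Polynomial D) q := hxq
    rw [hq, Ideal.mem_bot] at this
    subst this
    exact (mem_nonZeroDivisors_iff_ne_zero.mp hd) rfl
  have hd₁ := hdisj q₁ c₁
  have hd₂ := hdisj q₂ c₂
  set Q₁ := Ideal.map (algebraMap D[X] K[X]) q₁ with hQ₁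
  set Q₂ := Ideal.map (algebraMap D[X] K[X]) q₂ with hQ₂
  have hP₁ : Q₁.IsPrime := IsLocalization.isPrime_of_isPrime_disjoint M K[X] q₁ h₁ hd₁
  have hP₂ : Q₂.IsPrime := IsLocalization.isPrime_of_isPrime_disjoint M K[X] q₂ h₂ hd₂
  have hc₁ : Ideal.comap (algebraMap D[X] K[X]) Q₁ = q₁ :=
    IsLocalization.comap_map_of_isPrime_disjoint M K[X] h₁ hd₁
  have hc₂ : Ideal.comap (algebraMap D[X] K[X]) Q₂ = q₂ :=
    IsLocalization.comap_map_of_isPrime_disjoint M K[X] h₂ hd₂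
  have hne : Q₁ ≠ Q₂ := fun h => h12.ne (by rw [← hc₁, ← hc₂, h])
  have hQbot : Q₁ ≠ ⊥ := by
    intro h
    have hinj : Function.Injective (algebraMap D[X] K[X]) :=
      Polynomial.map_injective _ (IsFractionRing.injective D K)
    have : q₁ = ⊥ := by
      rw [← hc₁, h]
      exact (RingHom.injective_iff_ker_eq_bot _).mp hinj
    exact (bot_le.trans_lt h01).ne' this
  haveI : Q₁.IsMaximal := @IsPrime.to_maximal_ideal _ _ _ _ _ hP₁ hQbot
  exact hne (this.eq_of_le hP₂.ne_top (Ideal.map_mono h12.le))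

end Aux

/-- In a chain of three distinct primes of `R[x]`, at most two have the same
contraction to `R`. -/
theorem not_all_contractions_eq {R : Type*} [CommRing R]
    (p₀ p₁ p₂ : Ideal (Polynomial R)) (h₀ : p₀.IsPrime) (h₁ : p₁.IsPrime)
    (h₂ : p₂.IsPrime) (h01 : p₀ < p₁) (h12 : p₁ < p₂) :
    ¬(Ideal.comap (C : R →+* Polynomial R) p₀ = Ideal.comap (C : R →+* Polynomial R) p₁ ∧
      Ideal.comap (C : R →+* Polynomial R) p₁ = Ideal.comap (C : R →+* Polynomial R) p₂) := by
  rintro ⟨e01, e12⟩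
  set 𝔭 := Ideal.comap (C : R →+* Polynomial R) p₀ with h𝔭
  haveI hp : 𝔭.IsPrime := Ideal.IsPrime.comap _
  set D := R ⧸ 𝔭
  set φ := mapRingHom (Ideal.Quotient.mk 𝔭) with hφ
  have hsurj : Function.Surjective φ := Polynomial.map_surjective _ Ideal.Quotient.mk_surjective
  have hcom : ∀ i : Fin 3, Ideal.comap (C : R →+* Polynomial R) (![p₀, p₁, p₂] i) = 𝔭 := by
    intro i
    fin_cases i
    · rfl
    · exact e01.symm
    · exact (e01.trans e12).symm
  have hker : ∀ i : Fin 3, RingHom.ker φ ≤ ![p₀, p₁, p₂] i := by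
    intro i
    rw [hφ, Polynomial.ker_mapRingHom, Ideal.mk_ker, Ideal.map_le_iff_le_comap, hcom i]
  set q : Fin 3 → Ideal D[X] := fun i => Ideal.map φ (![p₀, p₁, p₂] i) with hq
  have hcomap : ∀ i, Ideal.comap φ (q i) = ![p₀, p₁, p₂] i := by
    intro i
    rw [hq, Ideal.comap_map_of_surjective φ hsurj, ← RingHom.ker_eq_comap_bot, sup_eq_left.mpr (hker i)]
  have hprime : ∀ i, (q i).IsPrime := by
    intro i
    have : (![p₀, p₁, p₂] i).IsPrime := by fin_cases i <;> assumption
    exact Ideal.map_isPrime_of_surjective hsurj (hker i)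
  have hlt : ∀ i j : Fin 3, ![p₀, p₁, p₂] i < ![p₀, p₁, p₂] j → q i < q j := by
    intro i j hij
    refine lt_of_le_of_ne (Ideal.map_mono hij.le) ?_
    intro h
    exact hij.ne (by rw [← hcomap i, ← hcomap j, h])
  have hcontr : ∀ i, Ideal.comap (C : D →+* D[X]) (q i) = ⊥ := by
    intro i
    refine le_antisymm ?_ bot_le
    intro d hd
    obtain ⟨r, rfl⟩ := Ideal.Quotient.mk_surjective d
    have hC : (C : D →+* D[X]) (Ideal.Quotient.mk 𝔭 r) = φ (C r) := by
      simp [hφ]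
    have : φ (C r) ∈ q i := by rw [← hC]; exact hd
    have hr : C r ∈ ![p₀, p₁, p₂] i := by rw [← hcomap i]; exact this
    have : r ∈ 𝔭 := by rw [← hcom i]; exact hr
    exact Ideal.mem_bot.mpr (Ideal.Quotient.eq_zero_iff_mem.mpr this)
  exact aux_domain (q 0) (q 1) (q 2) (hprime 0) (hprime 1) (hprime 2)
    (hlt 0 1 (by simpa using h01)) (hlt 1 2 (by simpa using h12)) (hcontr 1) (hcontr 2)
end

section
/- Let p be a prime, and let N : ℤ[n] → ℤ[x,n] be the inclusion map of polynomial rings. For a prime number q ≠ p, the chain of prime ideals 0 ⊂ (q) ⊂ (q,x) ⊂ (q,x,n) in ℤ[x,n] is a strictly increasing chain of length 3, and each contraction under N gives primes 0 ⊆ (q) ⊆ (q) ⊆ (q,n) in ℤ[n]. -/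
open Polynomial

lemma span_insert_X_eq_comap {R : Type*} [CommRing R] (s : Set R) :
    Ideal.span (insert (X : R[X]) (Polynomial.C '' s)) =
      (Ideal.span s).comap (evalRingHom 0 : R[X] →+* R) := by
  apply le_antisymm
  · rw [Ideal.span_le]
    rintro f (rfl | ⟨a, ha, rfl⟩)
    · simp [Ideal.mem_comap]
    · simpa [Ideal.mem_comap] using Ideal.subset_span ha
  · intro f hf
    rw [Ideal.mem_comap] at hf
    have hsplit : f = Polynomial.C (f.coeff 0) + (f - Polynomial.C (f.coeff 0)) := by ring
    rw [hsplit]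
    refine Ideal.add_mem _ ?_ ?_
    · have h1 : Polynomial.C (f.coeff 0) ∈
          Ideal.map (Polynomial.C : R →+* R[X]) (Ideal.span s) :=
        Ideal.mem_map_of_mem _ (by rwa [coeff_zero_eq_eval_zero])
      rw [Ideal.map_span] at h1
      exact Ideal.span_mono (Set.subset_insert _ _) h1
    · obtain ⟨g, hg⟩ := X_dvd_iff.2 (by simp : (f - Polynomial.C (f.coeff 0)).coeff 0 = 0)
      rw [hg]
      exact Ideal.mul_mem_right _ _ (Ideal.subset_span (Set.mem_insert _ _))

lemma eval0_comp_C {R : Type*} [CommRing R] :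
    (evalRingHom (0 : R)).comp (Polynomial.C : R →+* R[X]) = RingHom.id R := by
  ext r; simp

/-- Identify `ℤ[x,n]` with `(ℤ[n])[x]` (so `x = X`, `n = C X`, and `ℤ[n]` includes via
`N = C`). For a prime `q ≠ p`, the chain `0 ⊂ (q) ⊂ (q,x) ⊂ (q,x,n)` is a strictly
increasing chain of primes of length 3, whose contractions to `ℤ[n]` are
`0, (q), (q), (q,n)`. -/
theorem chain_in_int_two_vars (p q : ℕ) (hp : p.Prime) (hq : q.Prime) (hqp : q ≠ p) :
    (⊥ : Ideal (Polynomial (Polynomial ℤ))).IsPrime ∧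
    (Ideal.span ({C (C (q : ℤ))} : Set (Polynomial (Polynomial ℤ)))).IsPrime ∧
    (Ideal.span ({C (C (q : ℤ)), X} : Set (Polynomial (Polynomial ℤ)))).IsPrime ∧
    (Ideal.span ({C (C (q : ℤ)), X, C X} : Set (Polynomial (Polynomial ℤ)))).IsPrime ∧
    (⊥ : Ideal (Polynomial (Polynomial ℤ))) <
      Ideal.span ({C (C (q : ℤ))} : Set (Polynomial (Polynomial ℤ))) ∧
    Ideal.span ({C (C (q : ℤ))} : Set (Polynomial (Polynomial ℤ))) <
      Ideal.span ({C (C (q : ℤ)), X} : Set (Polynomial (Polynomial ℤ))) ∧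
    Ideal.span ({C (C (q : ℤ)), X} : Set (Polynomial (Polynomial ℤ))) <
      Ideal.span ({C (C (q : ℤ)), X, C X} : Set (Polynomial (Polynomial ℤ))) ∧
    Ideal.comap (C : Polynomial ℤ →+* Polynomial (Polynomial ℤ))
      (⊥ : Ideal (Polynomial (Polynomial ℤ))) = ⊥ ∧
    Ideal.comap (C : Polynomial ℤ →+* Polynomial (Polynomial ℤ))
      (Ideal.span ({C (C (q : ℤ))} : Set (Polynomial (Polynomial ℤ)))) =
      Ideal.span ({C (q : ℤ)} : Set (Polynomial ℤ)) ∧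
    Ideal.comap (C : Polynomial ℤ →+* Polynomial (Polynomial ℤ))
      (Ideal.span ({C (C (q : ℤ)), X} : Set (Polynomial (Polynomial ℤ)))) =
      Ideal.span ({C (q : ℤ)} : Set (Polynomial ℤ)) ∧
    Ideal.comap (C : Polynomial ℤ →+* Polynomial (Polynomial ℤ))
      (Ideal.span ({C (C (q : ℤ)), X, C X} : Set (Polynomial (Polynomial ℤ)))) =
      Ideal.span ({C (q : ℤ), X} : Set (Polynomial ℤ)) := by
  have hqZ : Prime ((q : ℤ)) := Nat.prime_iff_prime_int.1 hq
  have hCq : Prime (C (q : ℤ)) := Polynomial.prime_C_iff.2 hqZ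
  have hCCq : Prime (C (C (q : ℤ)) : Polynomial (Polynomial ℤ)) :=
    Polynomial.prime_C_iff.2 hCq
  -- descriptions of the bigger ideals as comaps
  have P2eq : (Ideal.span ({C (C (q : ℤ)), X} : Set (Polynomial (Polynomial ℤ)))) =
      Ideal.comap (evalRingHom 0) (Ideal.span ({C (q : ℤ)} : Set (Polynomial ℤ))) := by
    rw [← span_insert_X_eq_comap]
    congr 1
    simp [Set.image_singleton, Set.pair_comm]
  have Rinner : (Ideal.span ({C (q : ℤ), X} : Set (Polynomial ℤ))) =
      Ideal.comap (evalRingHom 0) (Ideal.span ({(q : ℤ)} : Set ℤ)) := by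
    rw [← span_insert_X_eq_comap]
    congr 1
    simp [Set.image_singleton, Set.pair_comm]
  have P3eq : (Ideal.span ({C (C (q : ℤ)), X, C X} : Set (Polynomial (Polynomial ℤ)))) =
      Ideal.comap (evalRingHom 0) (Ideal.span ({C (q : ℤ), X} : Set (Polynomial ℤ))) := by
    rw [← span_insert_X_eq_comap]
    congr 1
    ext f
    simp [Set.image_insert_eq]
    tauto
  have hP1 : (Ideal.span ({C (C (q : ℤ))} : Set (Polynomial (Polynomial ℤ)))).IsPrime :=
    (Ideal.span_singleton_prime hCCq.ne_zero).2 hCCq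
  have hRq : (Ideal.span ({C (q : ℤ)} : Set (Polynomial ℤ))).IsPrime :=
    (Ideal.span_singleton_prime hCq.ne_zero).2 hCq
  have hZq : (Ideal.span ({(q : ℤ)} : Set ℤ)).IsPrime :=
    (Ideal.span_singleton_prime hqZ.ne_zero).2 hqZ
  have hRqX : (Ideal.span ({C (q : ℤ), X} : Set (Polynomial ℤ))).IsPrime := by
    rw [Rinner]; exact hZq.comap _
  have hP2 : (Ideal.span ({C (C (q : ℤ)), X} : Set (Polynomial (Polynomial ℤ)))).IsPrime := by
    rw [P2eq]; exact hRq.comap _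
  have hP3 : (Ideal.span ({C (C (q : ℤ)), X, C X} : Set (Polynomial (Polynomial ℤ)))).IsPrime := by
    rw [P3eq]; exact hRqX.comap _
  -- X not in span of constant prime
  have hX1 : ∀ (R : Type) (_ : CommRing R) (_ : IsDomain R) (c : R), Prime c →
      (X : R[X]) ∉ Ideal.span ({Polynomial.C c} : Set R[X]) := by
    intro R _ _ c hc h
    rw [Ideal.mem_span_singleton] at h
    have h1 := (Polynomial.C_dvd_iff_dvd_coeff _ _).1 h 1
    simp at h1
    exact hc.not_unit (isUnit_of_dvd_one h1)
  refine ⟨Ideal.bot_prime, hP1, hP2, hP3, ?_, ?_, ?_, ?_, ?_, ?_, ?_⟩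
  · rw [bot_lt_iff_ne_bot, Ne, Ideal.span_singleton_eq_bot]
    exact hCCq.ne_zero
  · rw [SetLike.lt_iff_le_and_exists]
    refine ⟨Ideal.span_mono (by simp), X, Ideal.subset_span (by simp), ?_⟩
    exact hX1 _ inferInstance inferInstance _ hCq
  · rw [SetLike.lt_iff_le_and_exists]
    refine ⟨Ideal.span_mono (by intro a ha; simp at ha ⊢; tauto), C X,
      Ideal.subset_span (by simp), ?_⟩
    rw [P2eq, Ideal.mem_comap]
    simpa using hX1 _ inferInstance inferInstance _ hqZ
  · ext r
    simp [Ideal.mem_comap]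
  · ext r
    simp only [Ideal.mem_comap, Ideal.mem_span_singleton]
    constructor
    · intro h
      have h0 := (Polynomial.C_dvd_iff_dvd_coeff _ _).1 h 0
      simpa using h0
    · exact fun h => map_dvd Polynomial.C h
  · rw [P2eq, Ideal.comap_comap, eval0_comp_C, Ideal.comap_id]
  · rw [P3eq, Ideal.comap_comap, eval0_comp_C, Ideal.comap_id]
end
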